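/- arXiv:1006.1857 — 5 statements merged into one kernel-verified Lean document; each statement's English description precedes it below -/
import Mathlib

section
/- Define q : O_2^n × O_2^n → {±1} by q(j,i) = χ_i(j) where χ is the order-comparison cocycle on transpositions. Then q is a rack 2-cocycle on the conjugation rack of transpositions: q_{i, j▷k} q_{j,k} = q_{i▷j, i▷k} q_{i,k} for all transpositions i, j, k. -/
/-- The order-comparison sign `χ_i(σ)` for a transposition `i = (a b)`,
`a < b`: it is `1` if `σ a < σ b` and `-1` otherwise (and `-1` by convention
if `i` is not a transposition). -/
noncomputable def chiSwap {n : ℕ} (i σ : Equiv.Perm (Fin n)) : ℤ :=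
  if ∃ a b : Fin n, a < b ∧ i = Equiv.swap a b ∧ σ a < σ b then 1 else -1

/-!
`χ_k` is a crossed homomorphism for the conjugation action: for `k = (e f)`,
`χ_k(σ) = 1` exactly when `σ` preserves the relative order of `e` and `f`, and the order is
preserved by `τ σ` iff `σ` and `τ` (on `σ e, σ f`) both preserve or both reverse it, so
`χ_k(τ σ) = χ_{σ k σ⁻¹}(τ) χ_k(σ)`. Both sides of the cocycle identity then equal `χ_k(i j)`,
since `i j = (i j i⁻¹) i`.
-/

open Equiv

lemma Equiv.eq_and_eq_of_swap_eq_swap {α : Type*} [LinearOrder α] {a b x y : α}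
    (hab : a < b) (hxy : x < y) (h : swap a b = swap x y) : a = x ∧ b = y := by
  have ha : swap x y a = b := by rw [← h, swap_apply_left]
  have hb : swap x y b = a := by rw [← h, swap_apply_right]
  rw [swap_apply_def] at ha hb
  split_ifs at ha hb <;> subst_vars <;> first | exact ⟨rfl, rfl⟩ | order

lemma ite_iff_mul_ite_iff (p q r : Prop) [Decidable p] [Decidable q] [Decidable r] :
    ((if (p ↔ q) then 1 else -1) * (if (q ↔ r) then 1 else -1) : ℤ) =
      if (p ↔ r) then 1 else -1 := by
  by_cases p <;> by_cases q <;> by_cases r <;> simp_all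

lemma chiSwap_swap_of_lt {n : ℕ} {x y : Fin n} (hxy : x < y) (σ : Perm (Fin n)) :
    chiSwap (swap x y) σ = if σ x < σ y then 1 else -1 := by
  refine if_congr ⟨?_, fun hσ ↦ ⟨x, y, hxy, rfl, hσ⟩⟩ rfl rfl
  rintro ⟨a, b, hab, h, hσ⟩
  obtain ⟨rfl, rfl⟩ := eq_and_eq_of_swap_eq_swap hab hxy h.symm
  exact hσ

lemma chiSwap_swap {n : ℕ} {x y : Fin n} (hxy : x ≠ y) (σ : Perm (Fin n)) :
    chiSwap (swap x y) σ = if (σ x < σ y ↔ x < y) then 1 else -1 := by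
  rcases hxy.lt_or_gt with hlt | hgt
  · simp [chiSwap_swap_of_lt hlt, hlt]
  · have hσ : σ y ≠ σ x := σ.injective.ne hxy.symm
    rw [swap_comm, chiSwap_swap_of_lt hgt]
    refine if_congr ?_ rfl rfl
    grind

lemma chiSwap_mul {n : ℕ} {k : Perm (Fin n)} (hk : k.IsSwap) (τ σ : Perm (Fin n)) :
    chiSwap k (τ * σ) = chiSwap (σ * k * σ⁻¹) τ * chiSwap k σ := by
  obtain ⟨e, f, hef, rfl⟩ := hk
  rw [← swap_apply_apply, chiSwap_swap (σ.injective.ne hef), chiSwap_swap hef, chiSwap_swap hef]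
  exact (ite_iff_mul_ite_iff _ _ _).symm

theorem stmt_5_general (n : ℕ) (i j k : Equiv.Perm (Fin n))
    (hk : k.IsSwap) :
    chiSwap (j * k * j⁻¹) i * chiSwap k j =
      chiSwap (i * k * i⁻¹) (i * j * i⁻¹) * chiSwap k i := by
  rw [← chiSwap_mul hk, ← chiSwap_mul hk, inv_mul_cancel_right]

/-- `q(j,i) := χ_i(j)` is a rack 2-cocycle on the conjugation
rack of transpositions of `Sₙ`:
`q_{i, j▷k} q_{j,k} = q_{i▷j, i▷k} q_{i,k}`, where `x ▷ y = x y x⁻¹`. -/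
theorem stmt_5 (n : ℕ) (i j k : Equiv.Perm (Fin n))
    (hi : i.IsSwap) (hj : j.IsSwap) (hk : k.IsSwap) :
    chiSwap (j * k * j⁻¹) i * chiSwap k j =
      chiSwap (i * k * i⁻¹) (i * j * i⁻¹) * chiSwap k i :=
  stmt_5_general n i j k hk
end

section
/- Let (X,▷) be a rack with a principal YD-realization data over a group G: an action · of G on X, a map g : X → G with g_{h·i} = h g_i h⁻¹ and g_i · j = i ▷ j, and 1-cocycles χ_i : G → k^× with χ_i(ht) = χ_i(t) χ_{t·i}(h) and χ_i(g_j) = q_{ji}, for a rack 2-cocycle q. Assume (i ▷ j) ▷ i = j for all i, j ∈ X. Then for any f ∈ G and i, j ∈ X: χ_i(f) · q_{(f·i) ▷ (f·j), f·i} = χ_j(f) · q_{i ▷ j, i}. -/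
/-- Given a rack `(X,▷)` with 2-cocycle `q`, a principal
YD-realization `(·, g, (χ_i))` over a group `G`, and the involutivity
condition `(i▷j)▷i = j`, one has
`χ_i(f) · q_{(f·i)▷(f·j), f·i} = χ_j(f) · q_{i▷j, i}` for all `f ∈ G`,
`i, j ∈ X`. -/
theorem stmt_6 {X G k : Type*} [Group G] [Field k]
    (op : X → X → X)
    (hbij : ∀ i : X, Function.Bijective (op i))
    (hsd : ∀ i j l : X, op i (op j l) = op (op i j) (op i l))
    (q : X → X → k) (hq : ∀ i j l : X, q i j ≠ 0)
    (hqcoc : ∀ i j l : X, q i (op j l) * q j l = q (op i j) (op i l) * q i l)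
    (act : G → X → X)
    (hact1 : ∀ i : X, act 1 i = i)
    (hactmul : ∀ (h t : G) (i : X), act (h * t) i = act h (act t i))
    (g : X → G)
    (hgequiv : ∀ (h : G) (i : X), g (act h i) = h * g i * h⁻¹)
    (hgop : ∀ i j : X, act (g i) j = op i j)
    (chi : X → G → k)
    (hchicoc : ∀ (i : X) (h t : G), chi i (h * t) = chi i t * chi (act t i) h)
    (hchiq : ∀ i j : X, chi i (g j) = q j i)
    (hinv : ∀ i j : X, op (op i j) i = j) :
    ∀ (f : G) (i j : X),
      chi i f * q (op (act f i) (act f j)) (act f i) = chi j f * q (op i j) i := by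
  intro f i j
  set m := g (op i j) with hm
  have hactop : act f (op i j) = op (act f i) (act f j) := by
    calc act f (op i j) = act f (act (g i) j) := by rw [hgop]
      _ = act (f * g i) j := (hactmul f (g i) j).symm
      _ = act ((f * g i * f⁻¹) * f) j := by group
      _ = act (f * g i * f⁻¹) (act f j) := hactmul _ _ _
      _ = act (g (act f i)) (act f j) := by rw [hgequiv]
      _ = op (act f i) (act f j) := hgop _ _
  -- the key: chi i ((f*m*f⁻¹)*f) = chi i (f*m) computed two ways
  have key : chi i f * chi (act f i) (f * m * f⁻¹) = chi i m * chi (act m i) f := by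
    have h1 : chi i ((f * m * f⁻¹) * f) = chi i f * chi (act f i) (f * m * f⁻¹) :=
      hchicoc i _ f
    have h2 : chi i (f * m) = chi i m * chi (act m i) f := hchicoc i f m
    have : (f * m * f⁻¹) * f = f * m := by group
    rw [this] at h1
    rw [← h1, h2]
  have hmi : act m i = j := by rw [hm, hgop, hinv]
  have hqL : chi (act f i) (f * m * f⁻¹) = q (op (act f i) (act f j)) (act f i) := by
    have : f * m * f⁻¹ = g (act f (op i j)) := (hgequiv f (op i j)).symm
    rw [this, hchiq, hactop]
  have hqR : chi i m = q (op i j) i := hchiq i (op i j)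
  rw [← hqL, ← hqR, key, hmi, mul_comm]
end

section
/- Let H = ⊕_{n≥0} H(n) be a graded Hopf algebra over a field k with H(0) a Hopf subalgebra (coradically graded), and let σ₀ : H(0) × H(0) → k be a convolution-invertible Hopf 2-cocycle on H(0). Define σ : H × H → k on homogeneous elements by σ(x,y) = σ₀(x,y) if x, y ∈ H(0), and σ(x,y) = 0 otherwise. Then σ is a convolution-invertible Hopf 2-cocycle on H extending σ₀, i.e., σ(x₁,y₁)σ(x₂y₂,z) = σ(y₁,z₁)σ(x,y₂z₂) and σ(x,1) = σ(1,x) = ε(x). -/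
open TensorProduct

namespace Stmt7

/-- `xs` is a Sweedler expansion of `Δ x`. -/
def IsExpansion (k : Type*) {H : Type*} [CommRing k] [Ring H] [HopfAlgebra k H] (x : H) (xs : List (H × H)) : Prop :=
  Coalgebra.comul (R := k) x = (xs.map fun p => p.1 ⊗ₜ[k] p.2).sum

variable {k H : Type*} [CommRing k] [Ring H] [HopfAlgebra k H]

/-- The Hopf 2-cocycle condition
`σ(x₍₁₎,y₍₁₎)σ(x₍₂₎y₍₂₎,z) = σ(y₍₁₎,z₍₁₎)σ(x,y₍₂₎z₍₂₎)`, expressed via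
Sweedler expansions. -/
def IsCocycleAt (σ : H →ₗ[k] H →ₗ[k] k) (x y z : H) : Prop :=
  ∀ xs ys zs : List (H × H),
    IsExpansion k x xs → IsExpansion k y ys → IsExpansion k z zs →
      ((xs.map fun px =>
        (ys.map fun py => σ px.1 py.1 * σ (px.2 * py.2) z).sum).sum =
       (ys.map fun py =>
        (zs.map fun pz => σ py.1 pz.1 * σ x (py.2 * pz.2)).sum).sum)

/-- `σ'` is a convolution inverse of `σ` at the pair `(x, y)`. -/
def IsConvInverseAt (σ σ' : H →ₗ[k] H →ₗ[k] k) (x y : H) : Prop :=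
  ∀ xs ys : List (H × H),
    IsExpansion k x xs → IsExpansion k y ys →
      ((xs.map fun px => (ys.map fun py =>
          σ px.1 py.1 * σ' px.2 py.2).sum).sum =
        Coalgebra.counit (R := k) x * Coalgebra.counit (R := k) y ∧
       (xs.map fun px => (ys.map fun py =>
          σ' px.1 py.1 * σ px.2 py.2).sum).sum =
        Coalgebra.counit (R := k) x * Coalgebra.counit (R := k) y)

end Stmt7

/-! The projection `π₀ : H → H(0)` is a bialgebra endomorphism of `H`: it is multiplicative
because the grading is by `ℕ`, it commutes with `Δ` because `Δ` respects the grading, and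
`ε ∘ π₀ = ε` because `ε` vanishes in positive degrees. The form `σ` is the pullback
`σ₀ ∘ (π₀ × π₀)`, and pulling a cocycle, its normalisation and a convolution inverse back
along a bialgebra map preserves them. -/

open Coalgebra

namespace Stmt7

section Pullback

variable {k H K : Type*} [CommRing k] [Ring H] [HopfAlgebra k H] [Ring K] [HopfAlgebra k K]

theorem IsExpansion.map (φ : H →ₐc[k] K) {x : H} {xs : List (H × H)}
    (hx : IsExpansion k x xs) : IsExpansion k (φ x) (xs.map (Prod.map φ φ)) := by
  rw [IsExpansion, ← CoalgHomClass.map_comp_comul_apply, hx, map_list_sum, List.map_map,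
    List.map_map]
  rfl

theorem IsCocycleAt.compl₁₂ {σ : K →ₗ[k] K →ₗ[k] k} (φ : H →ₐc[k] K) {x y z : H}
    (h : IsCocycleAt σ (φ x) (φ y) (φ z)) :
    IsCocycleAt (σ.compl₁₂ (φ : H →ₗ[k] K) (φ : H →ₗ[k] K)) x y z := by
  intro xs ys zs hx hy hz
  simpa [List.map_map, Function.comp_def] using h _ _ _ (hx.map φ) (hy.map φ) (hz.map φ)

theorem IsConvInverseAt.compl₁₂ {σ σ' : K →ₗ[k] K →ₗ[k] k} (φ : H →ₐc[k] K) {x y : H}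
    (h : IsConvInverseAt σ σ' (φ x) (φ y)) :
    IsConvInverseAt (σ.compl₁₂ (φ : H →ₗ[k] K) (φ : H →ₗ[k] K))
      (σ'.compl₁₂ (φ : H →ₗ[k] K) (φ : H →ₗ[k] K)) x y := by
  intro xs ys hx hy
  simpa [List.map_map, Function.comp_def] using h _ _ (hx.map φ) (hy.map φ)

end Pullback

section Proj

variable {ι R A : Type*} [DecidableEq ι] [AddMonoid ι] [CommSemiring R] [Semiring A] [Algebra R A]
  {𝒜 : ι → Submodule R A} [GradedAlgebra 𝒜]

theorem _root_.GradedAlgebra.proj_of_mem {i : ι} {x : A} (hx : x ∈ 𝒜 i) :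
    GradedAlgebra.proj 𝒜 i x = x := by
  rw [GradedAlgebra.proj_apply, DirectSum.decompose_of_mem_same 𝒜 hx]

theorem _root_.GradedAlgebra.proj_of_mem_ne {i j : ι} {x : A} (hx : x ∈ 𝒜 i) (hij : i ≠ j) :
    GradedAlgebra.proj 𝒜 j x = 0 := by
  rw [GradedAlgebra.proj_apply, DirectSum.decompose_of_mem_ne 𝒜 hx hij]

end Proj

section Graded

variable {k H : Type*} [CommRing k] [Ring H] [HopfAlgebra k H]

def tensorGrade (𝒜 : ℕ → Submodule k H) (n : ℕ) : Submodule k (H ⊗[k] H) :=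
  ⨆ (p : ℕ × ℕ) (_ : p.1 + p.2 = n),
    LinearMap.range (TensorProduct.map (𝒜 p.1).subtype (𝒜 p.2).subtype)

theorem tensorGrade_le_eqLocus {𝒜 : ℕ → Submodule k H} {M : Type*} [AddCommGroup M] [Module k M]
    {n : ℕ} {f g : H ⊗[k] H →ₗ[k] M}
    (h : ∀ i j, i + j = n → ∀ a ∈ 𝒜 i, ∀ b ∈ 𝒜 j, f (a ⊗ₜ b) = g (a ⊗ₜ b)) :
    tensorGrade 𝒜 n ≤ LinearMap.eqLocus f g := by
  refine iSup₂_le fun p hp => ?_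
  have hfg : f ∘ₗ TensorProduct.map (𝒜 p.1).subtype (𝒜 p.2).subtype =
      g ∘ₗ TensorProduct.map (𝒜 p.1).subtype (𝒜 p.2).subtype :=
    TensorProduct.ext' fun a b => h p.1 p.2 hp a a.2 b b.2
  rintro _ ⟨u, rfl⟩
  exact LinearMap.congr_fun hfg u

def IsGradedComul (𝒜 : ℕ → Submodule k H) : Prop :=
  ∀ n : ℕ, ∀ x ∈ 𝒜 n, comul (R := k) x ∈ tensorGrade 𝒜 n

variable {𝒜 : ℕ → Submodule k H} [GradedAlgebra 𝒜]

open GradedAlgebra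

theorem counit_eq_zero_of_mem (hcomul : IsGradedComul 𝒜) {n : ℕ} (hn : n ≠ 0) {x : H}
    (hx : x ∈ 𝒜 n) : counit (R := k) x = 0 := by
  -- Project `(id ⊗ ε) Δx = x` to degree `n` and `(ε ⊗ id) Δx = x` to degree `0`: after applying
  -- `ε`, both give `∑ ε(a) ε(b)` over the components of `Δx` in `H(n) ⊗ H(0)`.
  have hagree : tensorGrade 𝒜 n ≤ LinearMap.eqLocus
      (LinearMap.mul' k k ∘ₗ map (counit ∘ₗ proj 𝒜 n) counit)
      (LinearMap.mul' k k ∘ₗ map counit (counit ∘ₗ proj 𝒜 0)) := by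
    refine tensorGrade_le_eqLocus fun i j hij a ha b hb => ?_
    by_cases hj : j = 0
    · subst hj
      obtain rfl : i = n := by simpa using hij
      simp [proj_of_mem ha, proj_of_mem hb]
    · simp [proj_of_mem_ne ha (show i ≠ n by omega), proj_of_mem_ne hb hj]
  have hright : LinearMap.mul' k k ∘ₗ map (counit ∘ₗ proj 𝒜 n) counit =
      counit ∘ₗ proj 𝒜 n ∘ₗ (TensorProduct.rid k H).toLinearMap ∘ₗ (counit : H →ₗ[k] k).lTensor H :=
    TensorProduct.ext' fun a b => by simp [mul_comm]
  have hleft : LinearMap.mul' k k ∘ₗ map counit (counit ∘ₗ proj 𝒜 0) =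
      counit ∘ₗ proj 𝒜 0 ∘ₗ (TensorProduct.lid k H).toLinearMap ∘ₗ (counit : H →ₗ[k] k).rTensor H :=
    TensorProduct.ext' fun a b => by simp
  calc counit (R := k) x = counit (proj 𝒜 n x) := by rw [proj_of_mem hx]
    _ = (LinearMap.mul' k k ∘ₗ map (counit ∘ₗ proj 𝒜 n) counit) (comul x) := by
      simp [hright, lTensor_counit_comul]
    _ = (LinearMap.mul' k k ∘ₗ map counit (counit ∘ₗ proj 𝒜 0)) (comul x) :=
      hagree (hcomul n x hx)
    _ = counit (proj 𝒜 0 x) := by simp [hleft, rTensor_counit_comul]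
    _ = 0 := by rw [proj_of_mem_ne hx hn, map_zero]

theorem counit_comp_proj_zero (hcomul : IsGradedComul 𝒜) :
    counit ∘ₗ proj 𝒜 0 = counit := by
  refine DirectSum.decompose_lhom_ext 𝒜 fun n => LinearMap.ext fun ⟨x, hx⟩ => ?_
  by_cases hn : n = 0
  · subst hn
    simp [proj_of_mem hx]
  · simp [proj_of_mem_ne hx hn, counit_eq_zero_of_mem hcomul hn hx]

theorem map_proj_zero_comp_comul (hcomul : IsGradedComul 𝒜) :
    map (proj 𝒜 0) (proj 𝒜 0) ∘ₗ comul = comul ∘ₗ proj 𝒜 0 := by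
  refine DirectSum.decompose_lhom_ext 𝒜 fun n => LinearMap.ext fun ⟨x, hx⟩ => ?_
  simp only [LinearMap.comp_apply, Submodule.subtype_apply]
  by_cases hn : n = 0
  · subst hn
    rw [proj_of_mem hx]
    refine tensorGrade_le_eqLocus (g := LinearMap.id) (fun i j hij a ha b hb => ?_) (hcomul 0 x hx)
    obtain ⟨rfl, rfl⟩ : i = 0 ∧ j = 0 := by omega
    simp [proj_of_mem ha, proj_of_mem hb]
  · rw [proj_of_mem_ne hx hn, map_zero]
    refine tensorGrade_le_eqLocus (g := 0) (fun i j hij a ha b hb => ?_) (hcomul n x hx)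
    rcases Nat.eq_zero_or_pos i with rfl | hi
    · simp [proj_of_mem_ne hb (show j ≠ 0 by omega)]
    · simp [proj_of_mem_ne ha hi.ne']

def projZeroBialgHom (hcomul : IsGradedComul 𝒜) : H →ₐc[k] H where
  __ := proj 𝒜 0
  map_one' := (GradedRing.projZeroRingHom 𝒜).map_one
  map_mul' := (GradedRing.projZeroRingHom 𝒜).map_mul
  counit_comp := counit_comp_proj_zero hcomul
  map_comp_comul := map_proj_zero_comp_comul hcomul

end Graded

end Stmt7

/-- let `H = ⊕ₙ H(n)` be a graded Hopf algebra whose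
comultiplication respects the grading, and let `σ₀` be a convolution
invertible Hopf 2-cocycle on the degree-zero part `H(0)`. Then the bilinear
form `σ` defined by `σ = σ₀` on `H(0) × H(0)` and `σ = 0` on all other pairs
of homogeneous components is a convolution-invertible Hopf 2-cocycle on `H`
extending `σ₀`. -/
theorem stmt_7 {k H : Type*} [CommRing k] [Ring H] [HopfAlgebra k H]
    (𝒜 : ℕ → Submodule k H) [GradedAlgebra 𝒜]
    (hcomul : ∀ n : ℕ, ∀ x ∈ 𝒜 n,
      Coalgebra.comul (R := k) x ∈
        ⨆ (p : ℕ × ℕ) (_ : p.1 + p.2 = n),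
          LinearMap.range (TensorProduct.map (𝒜 p.1).subtype (𝒜 p.2).subtype))
    (σ₀ : H →ₗ[k] H →ₗ[k] k)
    (hσ₀coc : ∀ x ∈ 𝒜 0, ∀ y ∈ 𝒜 0, ∀ z ∈ 𝒜 0, Stmt7.IsCocycleAt σ₀ x y z)
    (hσ₀norm : ∀ x ∈ 𝒜 0,
      σ₀ x 1 = Coalgebra.counit (R := k) x ∧
      σ₀ 1 x = Coalgebra.counit (R := k) x)
    (hσ₀inv : ∃ σ₀' : H →ₗ[k] H →ₗ[k] k,
      ∀ x ∈ 𝒜 0, ∀ y ∈ 𝒜 0, Stmt7.IsConvInverseAt σ₀ σ₀' x y) :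
    ∃ σ : H →ₗ[k] H →ₗ[k] k,
      (∀ x ∈ 𝒜 0, ∀ y ∈ 𝒜 0, σ x y = σ₀ x y) ∧
      (∀ m n : ℕ, ¬(m = 0 ∧ n = 0) → ∀ x ∈ 𝒜 m, ∀ y ∈ 𝒜 n, σ x y = 0) ∧
      (∀ x y z : H, Stmt7.IsCocycleAt σ x y z) ∧
      (∀ x : H,
        σ x 1 = Coalgebra.counit (R := k) x ∧
        σ 1 x = Coalgebra.counit (R := k) x) ∧
      (∃ σ' : H →ₗ[k] H →ₗ[k] k, ∀ x y : H, Stmt7.IsConvInverseAt σ σ' x y) := by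
  obtain ⟨σ₀', hσ₀'⟩ := hσ₀inv
  set π := Stmt7.projZeroBialgHom hcomul
  have hπ_mem (x : H) : π x ∈ 𝒜 0 := SetLike.coe_mem (DirectSum.decompose 𝒜 x 0)
  have hπ_of_mem {x : H} (hx : x ∈ 𝒜 0) : π x = x := GradedAlgebra.proj_of_mem hx
  have hπ_of_mem_ne {n : ℕ} {x : H} (hx : x ∈ 𝒜 n) (hn : n ≠ 0) : π x = 0 :=
    GradedAlgebra.proj_of_mem_ne hx hn
  refine ⟨σ₀.compl₁₂ (π : H →ₗ[k] H) (π : H →ₗ[k] H), ?_, ?_,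
    fun x y z => (hσ₀coc _ (hπ_mem x) _ (hπ_mem y) _ (hπ_mem z)).compl₁₂ π, fun x => ?_,
    σ₀'.compl₁₂ (π : H →ₗ[k] H) (π : H →ₗ[k] H),
    fun x y => (hσ₀' _ (hπ_mem x) _ (hπ_mem y)).compl₁₂ π⟩
  · intro x hx y hy
    simp [hπ_of_mem hx, hπ_of_mem hy]
  · intro m n hmn x hx y hy
    rcases not_and_or.mp hmn with hm | hn
    · simp [hπ_of_mem_ne hx hm]
    · simp [hπ_of_mem_ne hy hn]
  · simp [hσ₀norm _ (hπ_mem x)]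
end

section
/- Let A be the algebra over a field k of characteristic zero presented by generators x, y and relations x² = 0, y² = 0, xyx = yxy. Then A has dimension 6, with basis {1, x, y, xy, yx, xyx}. -/
/-!
`A` is the nilCoxeter algebra of `S₃`, and `1, x, y, xy, yx, xyx` are its reduced words.
They span `A`: the relations show that left multiplication by `x` or `y` sends each of them to
another one or to `0`. They are linearly independent because the same rule defines an action of
`A` on `k⁶`, in which the six words send the first basis vector to the six basis vectors.
-/

/-- Relations `x² = 0`, `y² = 0`, `xyx = yxy` in the free algebra on two
generators (`X 0 = x`, `X 1 = y`). -/
inductive Stmt9Rel (k : Type*) [Field k] :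
    FreeAlgebra k (Fin 2) → FreeAlgebra k (Fin 2) → Prop
  | xx : Stmt9Rel k (FreeAlgebra.ι k 0 * FreeAlgebra.ι k 0) 0
  | yy : Stmt9Rel k (FreeAlgebra.ι k 1 * FreeAlgebra.ι k 1) 0
  | braid : Stmt9Rel k
      (FreeAlgebra.ι k 0 * FreeAlgebra.ι k 1 * FreeAlgebra.ι k 0)
      (FreeAlgebra.ι k 1 * FreeAlgebra.ι k 0 * FreeAlgebra.ι k 1)

open Matrix

theorem Submodule.eq_top_of_one_mem_of_mul_mem {R A : Type*} [CommSemiring R] [Semiring A]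
    [Algebra R A] {s : Set A} (hs : Algebra.adjoin R s = ⊤) (S : Submodule R A)
    (h1 : 1 ∈ S) (hmul : ∀ a ∈ s, ∀ b ∈ S, a * b ∈ S) : S = ⊤ := by
  refine Submodule.eq_top_iff'.2 fun a => ?_
  have ha : a ∈ Algebra.adjoin R s := hs ▸ Algebra.mem_top
  suffices ∀ b ∈ S, a * b ∈ S by simpa using this 1 h1
  induction ha using Algebra.adjoin_induction with
  | mem a ha => exact hmul a ha
  | algebraMap r => exact fun b hb => by simpa [Algebra.smul_def] using S.smul_mem r hb
  | add a a' _ _ ha ha' =>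
    exact fun b hb => by simpa [add_mul] using S.add_mem (ha b hb) (ha' b hb)
  | mul a a' _ _ ha ha' => exact fun b hb => by simpa [mul_assoc] using ha _ (ha' b hb)

theorem LinearIndependent.of_algHom_col {K A ι : Type*} [CommSemiring K] [Semiring A] [Algebra K A]
    [Fintype ι] [DecidableEq ι] (φ : A →ₐ[K] Matrix ι ι K) {v : ι → A} (j : ι)
    (hv : ∀ i, (φ (v i)).col j = Pi.single i 1) : LinearIndependent K v := by
  let colj : A →ₗ[K] ι → K :=
    { toFun := fun a => (φ a).col j
      map_add' := fun a b => by ext; simp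
      map_smul' := fun c a => by ext; simp }
  refine LinearIndependent.of_comp colj ?_
  convert (Pi.basisFun K ι).linearIndependent using 1
  ext i : 1
  rw [Pi.basisFun_apply]
  exact hv i

namespace Stmt9Rel

variable (k : Type*) [Field k]

def x : RingQuot (Stmt9Rel k) := RingQuot.mkRingHom (Stmt9Rel k) (FreeAlgebra.ι k 0)

def y : RingQuot (Stmt9Rel k) := RingQuot.mkRingHom (Stmt9Rel k) (FreeAlgebra.ι k 1)

theorem x_mul_x : x k * x k = 0 := by
  rw [x, ← map_mul, RingQuot.mkRingHom_rel xx, map_zero]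

theorem y_mul_y : y k * y k = 0 := by
  rw [y, ← map_mul, RingQuot.mkRingHom_rel yy, map_zero]

theorem x_mul_y_mul_x : x k * y k * x k = y k * x k * y k := by
  rw [x, y, ← map_mul, ← map_mul, RingQuot.mkRingHom_rel braid, map_mul, map_mul]

theorem mul_x_mul_x (a : RingQuot (Stmt9Rel k)) : a * x k * x k = 0 := by
  rw [mul_assoc, x_mul_x, mul_zero]

theorem adjoin_x_y : Algebra.adjoin k {x k, y k} = ⊤ := by
  have hrange : Set.range (RingQuot.mkAlgHom k (Stmt9Rel k) ∘ FreeAlgebra.ι k) = {x k, y k} := by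
    ext a
    simp [Fin.exists_fin_two, x, y, RingQuot.mkAlgHom, eq_comm]
  rw [← hrange, Set.range_comp, Algebra.adjoin_image, FreeAlgebra.adjoin_range_ι,
    Algebra.map_top, AlgHom.range_eq_top]
  exact RingQuot.mkAlgHom_surjective k (Stmt9Rel k)

def reducedWord : Fin 6 → RingQuot (Stmt9Rel k) :=
  ![1, x k, y k, x k * y k, y k * x k, x k * y k * x k]

theorem mul_reducedWord_mem {a : RingQuot (Stmt9Rel k)} (ha : a ∈ ({x k, y k} : Set _))
    (i : Fin 6) : a * reducedWord k i ∈ insert 0 (Set.range (reducedWord k)) := by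
  rcases ha with rfl | rfl <;> fin_cases i <;>
    simp [reducedWord, ← mul_assoc, x_mul_x, y_mul_y, mul_x_mul_x, ← x_mul_y_mul_x]

theorem span_reducedWord : Submodule.span k (Set.range (reducedWord k)) = ⊤ := by
  set S := Submodule.span k (Set.range (reducedWord k))
  have hS : insert 0 (Set.range (reducedWord k)) ⊆ S :=
    Set.insert_subset_iff.2 ⟨S.zero_mem, Submodule.subset_span⟩
  refine Submodule.eq_top_of_one_mem_of_mul_mem (adjoin_x_y k) S
    (Submodule.subset_span ⟨0, rfl⟩) fun a ha b hb => ?_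
  refine (Submodule.span_le (p := S.comap (LinearMap.mulLeft k a))).2
    (Set.range_subset_iff.2 fun i => hS (mul_reducedWord_mem k ha i)) hb

-- The matrices of left multiplication by `x` and `y` on `reducedWord`;
-- e.g. `y * (x * y) = x * y * x` is the entry `single 5 3`.
def matrixX : Matrix (Fin 6) (Fin 6) k := single 1 0 1 + single 3 2 1 + single 5 4 1

def matrixY : Matrix (Fin 6) (Fin 6) k := single 2 0 1 + single 4 1 1 + single 5 3 1

theorem matrixX_mul_matrixX : matrixX k * matrixX k = 0 := by
  simp [matrixX, add_mul, mul_add]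

theorem matrixY_mul_matrixY : matrixY k * matrixY k = 0 := by
  simp [matrixY, add_mul, mul_add]

theorem matrixX_mul_matrixY_mul_matrixX :
    matrixX k * matrixY k * matrixX k = matrixY k * matrixX k * matrixY k := by
  simp [matrixX, matrixY, add_mul, mul_add]

def toMatrix : RingQuot (Stmt9Rel k) →ₐ[k] Matrix (Fin 6) (Fin 6) k :=
  RingQuot.liftAlgHom k ⟨FreeAlgebra.lift k ![matrixX k, matrixY k], by
    rintro _ _ (_ | _ | _) <;>
      simp [matrixX_mul_matrixX, matrixY_mul_matrixY, matrixX_mul_matrixY_mul_matrixX]⟩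

theorem toMatrix_mkRingHom_ι (i : Fin 2) :
    toMatrix k (RingQuot.mkRingHom (Stmt9Rel k) (FreeAlgebra.ι k i)) =
      ![matrixX k, matrixY k] i := by
  rw [← RingQuot.mkAlgHom_coe k, AlgHom.coe_toRingHom, toMatrix,
    RingQuot.liftAlgHom_mkAlgHom_apply, FreeAlgebra.lift_ι_apply]

theorem toMatrix_x : toMatrix k (x k) = matrixX k := toMatrix_mkRingHom_ι k 0

theorem toMatrix_y : toMatrix k (y k) = matrixY k := toMatrix_mkRingHom_ι k 1

theorem toMatrix_reducedWord_col_zero (i : Fin 6) :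
    (toMatrix k (reducedWord k i)).col 0 = Pi.single i 1 := by
  fin_cases i <;> ext j <;>
    simp [reducedWord, toMatrix_x, toMatrix_y, matrixX, matrixY, add_mul, mul_add, single_apply,
      Pi.single_apply, one_apply, eq_comm]

theorem linearIndependent_reducedWord : LinearIndependent k (reducedWord k) :=
  .of_algHom_col (toMatrix k) 0 (toMatrix_reducedWord_col_zero k)

noncomputable def reducedWordBasis : Module.Basis (Fin 6) k (RingQuot (Stmt9Rel k)) :=
  .mk (linearIndependent_reducedWord k) (span_reducedWord k).ge

theorem coe_reducedWordBasis : ⇑(reducedWordBasis k) = reducedWord k :=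
  Module.Basis.coe_mk _ _

theorem finrank_eq_six : Module.finrank k (RingQuot (Stmt9Rel k)) = 6 := by
  rw [Module.finrank_eq_card_basis (reducedWordBasis k), Fintype.card_fin]

end Stmt9Rel

theorem stmt_9_general (k : Type*) [Field k] :
    Module.finrank k (RingQuot (Stmt9Rel k)) = 6 ∧
      ∃ B : Module.Basis (Fin 6) k (RingQuot (Stmt9Rel k)),
        (B : Fin 6 → RingQuot (Stmt9Rel k)) =
          (let x : RingQuot (Stmt9Rel k) :=
            RingQuot.mkRingHom (Stmt9Rel k) (FreeAlgebra.ι k 0)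
          let y : RingQuot (Stmt9Rel k) :=
            RingQuot.mkRingHom (Stmt9Rel k) (FreeAlgebra.ι k 1)
          ![1, x, y, x * y, y * x, x * y * x]) :=
  ⟨Stmt9Rel.finrank_eq_six k, Stmt9Rel.reducedWordBasis k, Stmt9Rel.coe_reducedWordBasis k⟩

/-- the algebra `k⟨x,y⟩/⟨x², y², xyx − yxy⟩` (char k = 0) has
dimension 6 with basis `{1, x, y, xy, yx, xyx}`. -/
theorem stmt_9 (k : Type*) [Field k] [CharZero k] :
    Module.finrank k (RingQuot (Stmt9Rel k)) = 6 ∧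
      ∃ B : Module.Basis (Fin 6) k (RingQuot (Stmt9Rel k)),
        (B : Fin 6 → RingQuot (Stmt9Rel k)) =
          (let x : RingQuot (Stmt9Rel k) :=
            RingQuot.mkRingHom (Stmt9Rel k) (FreeAlgebra.ι k 0)
          let y : RingQuot (Stmt9Rel k) :=
            RingQuot.mkRingHom (Stmt9Rel k) (FreeAlgebra.ι k 1)
          ![1, x, y, x * y, y * x, x * y * x]) :=
  stmt_9_general k
end

section
/- In the quadratic algebra B generated over a field k by {x_i : i ∈ X} for a rack X with 2-cocycle q, subject to the relations x_i x_j = q_{ij} x_{i▷j} x_i − q_{ij} q_{i▷j,i} x_j x_{i▷j} whenever (i,j) and (i▷j, i) exhaust a 2-element class, the following cubic relation holds: x_i x_j x_i + q_{i▷j, i} x_j x_i x_j = 0, provided also x_i² = x_j² = 0 and k = i▷j satisfies k ≠ i, k ≠ j. -/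
/-- in a `k`-algebra `B` with elements `x_i` indexed by a rack
`X` with 2-cocycle `q`, if `x_i² = x_j² = 0`, the quadratic relation
`x_i x_j − q_{ij} x_{i▷j} x_i + q_{ij} q_{i▷j,i} x_j x_{i▷j} = 0` holds,
and `i ▷ j ∉ {i, j}`, then `x_i x_j x_i + q_{i▷j,i} x_j x_i x_j = 0`. -/
theorem stmt_13 {k B X : Type*} [Field k] [Ring B] [Algebra k B]
    (op : X → X → X)
    (hbij : ∀ i : X, Function.Bijective (op i))
    (hsd : ∀ i j l : X, op i (op j l) = op (op i j) (op i l))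
    (q : X → X → k) (hq : ∀ a b : X, q a b ≠ 0)
    (x : X → B) (i j : X)
    (hne1 : op i j ≠ i) (hne2 : op i j ≠ j)
    (hxi : x i * x i = 0) (hxj : x j * x j = 0)
    (hrel : x i * x j - q i j • (x (op i j) * x i) +
      (q i j * q (op i j) i) • (x j * x (op i j)) = 0) :
    x i * x j * x i + q (op i j) i • (x j * x i * x j) = 0 := by
  have h1 : x i * x j = q i j • (x (op i j) * x i) -
      (q i j * q (op i j) i) • (x j * x (op i j)) := by
    have := hrel
    rw [← sub_eq_zero]
    rw [← hrel]
    abel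
  have h2 : x i * x j * x i = -((q i j * q (op i j) i) • (x j * (x (op i j) * x i))) := by
    simp [h1, sub_mul, smul_mul_assoc, mul_assoc, hxi]
  have h3 : x j * (x i * x j) = (q i j) • (x j * (x (op i j) * x i)) := by
    simp [h1, mul_sub, mul_smul_comm, ← mul_assoc, hxj]
  rw [h2, mul_assoc, h3, smul_smul, mul_comm (q (op i j) i), neg_add_cancel]
end
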